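/- Let S : [0,∞) → [0,∞) be a one-dimensional subordinator with Laplace transform E[e^{-rS(t)}] = e^{-tB(r)} for a Bernstein function B satisfying B(r) ≥ c r^{α/2} for all r ≥ r_0, with α ∈ (0,2), c, r_0 > 0. Then for every k > 0 there exists a constant C > 0 such that E[S(T)^{-k}] ≤ C T^{-2k/α} for all T ∈ (0,1]. -/

import Mathlib

/-!
From `Γ(k) s^{-k} = ∫₀^∞ r^{k-1} e^{-rs} dr` and Tonelli,
`Γ(k) E[S(T)^{-k}] ≤ ∫₀^∞ r^{k-1} e^{-T B(r)} dr`. A Laplace transform is at most `1`, so `B ≥ 0`;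
together with `T ≤ 1` and the lower bound on `B` for `r ≥ r₀` this gives
`e^{-T B(r)} ≤ e^{c r₀^{α/2}} e^{-T c r^{α/2}}` for every `r ≥ 0`, and the remaining integral is
`(2/α) Γ(2k/α) (T c)^{-2k/α}`.
-/

open MeasureTheory Real Set

lemma lintegral_rpow_mul_exp_neg_mul_rpow {p q b : ℝ} (hp : 0 < p) (hq : -1 < q) (hb : 0 < b) :
    ∫⁻ x in Ioi (0 : ℝ), ENNReal.ofReal (x ^ q * exp (-b * x ^ p)) =
      ENNReal.ofReal (b ^ (-(q + 1) / p) * (1 / p) * Gamma ((q + 1) / p)) := by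
  rw [← integral_rpow_mul_exp_neg_mul_rpow hp hq hb,
    ofReal_integral_eq_lintegral_ofReal (integrableOn_rpow_mul_exp_neg_mul_rpow hq hp hb)
      (ae_restrict_of_forall_mem measurableSet_Ioi fun x hx =>
        mul_nonneg (rpow_nonneg (le_of_lt hx) q) (exp_nonneg _))]

/-- Equality for `s > 0`; at `s = 0` the left side is `0` since `0 ^ (-k) = 0` in `Real.rpow`. -/
lemma ofReal_gamma_mul_rpow_neg_le {k s : ℝ} (hk : 0 < k) (hs : 0 ≤ s) :
    ENNReal.ofReal (Gamma k) * ENNReal.ofReal (s ^ (-k)) ≤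
      ∫⁻ r in Ioi (0 : ℝ), ENNReal.ofReal (r ^ (k - 1) * exp (-(r * s))) := by
  rcases hs.eq_or_lt with rfl | hs
  · simp [zero_rpow (neg_ne_zero.mpr hk.ne')]
  have hexp : ∀ r : ℝ, exp (-(r * s)) = exp (-s * r ^ (1 : ℝ)) := fun r => by
    rw [rpow_one, neg_mul, mul_comm]
  simp_rw [hexp]
  rw [lintegral_rpow_mul_exp_neg_mul_rpow one_pos (by linarith) hs, sub_add_cancel, div_one,
    div_one, div_one, mul_one, mul_comm, ← ENNReal.ofReal_mul (rpow_nonneg hs.le _)]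

lemma ofReal_gamma_mul_lintegral_rpow_neg_le {Ω : Type*} [MeasurableSpace Ω] (μ : Measure Ω)
    [SFinite μ] {X : Ω → ℝ} (hX : Measurable X) (hX0 : ∀ ω, 0 ≤ X ω) {k : ℝ} (hk : 0 < k) :
    ENNReal.ofReal (Gamma k) * ∫⁻ ω, ENNReal.ofReal (X ω ^ (-k)) ∂μ ≤
      ∫⁻ r in Ioi (0 : ℝ),
        ENNReal.ofReal (r ^ (k - 1)) * ∫⁻ ω, ENNReal.ofReal (exp (-(r * X ω))) ∂μ := by
  have hmeas : Measurable (Function.uncurry fun ω (r : ℝ) =>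
      ENNReal.ofReal (r ^ (k - 1) * exp (-(r * X ω)))) := by
    unfold Function.uncurry
    fun_prop
  calc ENNReal.ofReal (Gamma k) * ∫⁻ ω, ENNReal.ofReal (X ω ^ (-k)) ∂μ
      = ∫⁻ ω, ENNReal.ofReal (Gamma k) * ENNReal.ofReal (X ω ^ (-k)) ∂μ :=
        (lintegral_const_mul' _ _ ENNReal.ofReal_ne_top).symm
    _ ≤ ∫⁻ ω, (∫⁻ r in Ioi (0 : ℝ), ENNReal.ofReal (r ^ (k - 1) * exp (-(r * X ω)))) ∂μ :=
        lintegral_mono fun ω => ofReal_gamma_mul_rpow_neg_le hk (hX0 ω)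
    _ = ∫⁻ r in Ioi (0 : ℝ), ∫⁻ ω, ENNReal.ofReal (r ^ (k - 1) * exp (-(r * X ω))) ∂μ :=
        lintegral_lintegral_swap hmeas.aemeasurable
    _ = _ := setLIntegral_congr_fun measurableSet_Ioi fun r hr => by
        simp_rw [ENNReal.ofReal_mul (rpow_nonneg (le_of_lt hr) _)]
        exact lintegral_const_mul' _ _ ENNReal.ofReal_ne_top

lemma norm_exp_neg_mul_le_one {r x : ℝ} (hr : 0 ≤ r) (hx : 0 ≤ x) : ‖exp (-(r * x))‖ ≤ 1 := by
  rw [norm_of_nonneg (exp_nonneg _), exp_le_one_iff, neg_nonpos]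
  exact mul_nonneg hr hx

lemma lintegral_ofReal_exp_neg_mul {Ω : Type*} [MeasurableSpace Ω] (μ : Measure Ω)
    [IsFiniteMeasure μ] {X : Ω → ℝ} (hX : Measurable X) (hX0 : ∀ ω, 0 ≤ X ω) {r : ℝ}
    (hr : 0 ≤ r) :
    ∫⁻ ω, ENNReal.ofReal (exp (-(r * X ω))) ∂μ = ENNReal.ofReal (∫ ω, exp (-(r * X ω)) ∂μ) := by
  refine (ofReal_integral_eq_lintegral_ofReal ?_ (ae_of_all _ fun ω => exp_nonneg _)).symm
  exact (integrable_const 1).mono' (by fun_prop) (ae_of_all _ fun ω => norm_exp_neg_mul_le_one hr (hX0 ω))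

lemma integral_exp_neg_mul_le_one {Ω : Type*} [MeasurableSpace Ω] (μ : Measure Ω)
    [IsProbabilityMeasure μ] {X : Ω → ℝ} (hX0 : ∀ ω, 0 ≤ X ω) {r : ℝ} (hr : 0 ≤ r) :
    ∫ ω, exp (-(r * X ω)) ∂μ ≤ 1 := by
  simpa using (le_abs_self _).trans
    (norm_integral_le_of_norm_le_const (μ := μ) (ae_of_all _ fun ω => norm_exp_neg_mul_le_one hr (hX0 ω)))

lemma exp_neg_mul_le_exp_mul_exp_neg_rpow {p b c r r₀ T : ℝ} (hp : 0 ≤ p) (hc : 0 ≤ c)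
    (hr₀ : 0 ≤ r₀) (hT : T ∈ Ioc 0 1) (hr : 0 ≤ r) (hb0 : 0 ≤ b) (hb : r₀ ≤ r → c * r ^ p ≤ b) :
    exp (-(T * b)) ≤ exp (c * r₀ ^ p) * exp (-(T * c) * r ^ p) := by
  rw [← exp_add, exp_le_exp]
  have hr₀p : 0 ≤ c * r₀ ^ p := mul_nonneg hc (rpow_nonneg hr₀ _)
  rcases le_or_gt r₀ r with hr₀r | hrr₀
  · nlinarith [mul_le_mul_of_nonneg_left (hb hr₀r) hT.1.le]
  · have hmono : c * r ^ p ≤ c * r₀ ^ p :=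
      mul_le_mul_of_nonneg_left (rpow_le_rpow hr hrr₀.le hp) hc
    nlinarith [mul_nonneg hT.1.le hb0, mul_nonneg hc (rpow_nonneg hr p), hT.2]

lemma lintegral_rpow_mul_exp_neg_mul_le {B : ℝ → ℝ} {p c r₀ k T : ℝ} (hp : 0 < p) (hc : 0 < c)
    (hr₀ : 0 ≤ r₀) (hk : 0 < k) (hT : T ∈ Ioc 0 1) (hB0 : ∀ r, 0 ≤ r → 0 ≤ B r)
    (hB : ∀ r, r₀ ≤ r → c * r ^ p ≤ B r) :
    ∫⁻ r in Ioi (0 : ℝ), ENNReal.ofReal (r ^ (k - 1) * exp (-(T * B r))) ≤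
      ENNReal.ofReal (exp (c * r₀ ^ p) * (c ^ (-(k / p)) * (1 / p) * Gamma (k / p))
        * T ^ (-(k / p))) := by
  have hA : 0 ≤ exp (c * r₀ ^ p) := (exp_pos _).le
  calc ∫⁻ r in Ioi (0 : ℝ), ENNReal.ofReal (r ^ (k - 1) * exp (-(T * B r)))
      ≤ ∫⁻ r in Ioi (0 : ℝ), ENNReal.ofReal (exp (c * r₀ ^ p)) *
          ENNReal.ofReal (r ^ (k - 1) * exp (-(T * c) * r ^ p)) := by
        refine setLIntegral_mono (by fun_prop) fun r hr => ?_
        rw [← ENNReal.ofReal_mul hA]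
        refine ENNReal.ofReal_le_ofReal ?_
        have hexp := exp_neg_mul_le_exp_mul_exp_neg_rpow hp.le hc.le hr₀ hT (le_of_lt hr)
          (hB0 r (le_of_lt hr)) (hB r)
        have hrk : 0 ≤ r ^ (k - 1) := rpow_nonneg (le_of_lt hr) _
        nlinarith
    _ = _ := by
        rw [lintegral_const_mul' _ _ ENNReal.ofReal_ne_top,
          lintegral_rpow_mul_exp_neg_mul_rpow hp (by linarith) (mul_pos hT.1 hc),
          ← ENNReal.ofReal_mul hA, sub_add_cancel, neg_div, mul_rpow hT.1.le hc.le]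
        congr 1
        ring

/-- Negative moments of a subordinator whose Bernstein function satisfies
`B(r) ≥ c r^{α/2}` for `r ≥ r₀`: for every `k > 0` there is `C > 0` with
`E[S(T)^{-k}] ≤ C T^{-2k/α}` for all `T ∈ (0,1]`. -/
theorem stmt4 {Ω : Type*} [MeasurableSpace Ω] (μ : Measure Ω) [IsProbabilityMeasure μ]
    (S : ℝ → Ω → ℝ) (B : ℝ → ℝ) (α c r₀ : ℝ)
    (hα : α ∈ Set.Ioo (0:ℝ) 2) (hc : 0 < c) (hr₀ : 0 < r₀)
    (hSnn : ∀ t ω, 0 ≤ S t ω)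
    (hSmeas : ∀ t, Measurable (S t))
    (hLaplace : ∀ t r : ℝ, 0 ≤ t → 0 ≤ r →
      ∫ ω, Real.exp (-(r * S t ω)) ∂μ = Real.exp (-(t * B r)))
    (hB : ∀ r, r₀ ≤ r → c * r ^ (α / 2) ≤ B r)
    (k : ℝ) (hk : 0 < k) :
    ∃ C > 0, ∀ T ∈ Set.Ioc (0:ℝ) 1,
      ∫⁻ ω, ENNReal.ofReal ((S T ω) ^ (-k)) ∂μ ≤ ENNReal.ofReal (C * T ^ (-(2 * k / α))) := by
  obtain ⟨hα0, -⟩ := hα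
  have hB0 : ∀ r, 0 ≤ r → 0 ≤ B r := fun r hr => by
    have h := integral_exp_neg_mul_le_one μ (hSnn 1) hr
    rwa [hLaplace 1 r zero_le_one hr, one_mul, exp_le_one_iff, neg_nonpos] at h
  have hΓ : 0 < Gamma k := Gamma_pos_of_pos hk
  set K := exp (c * r₀ ^ (α / 2)) * (c ^ (-(2 * k / α)) * (1 / (α / 2)) * Gamma (2 * k / α))
  refine ⟨K / Gamma k, by positivity, fun T hT => ?_⟩
  rw [← ENNReal.mul_le_mul_iff_right (ENNReal.ofReal_pos.mpr hΓ).ne' ENNReal.ofReal_ne_top,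
    ← ENNReal.ofReal_mul hΓ.le, ← mul_assoc, mul_div_cancel₀ _ hΓ.ne']
  calc ENNReal.ofReal (Gamma k) * ∫⁻ ω, ENNReal.ofReal (S T ω ^ (-k)) ∂μ
      ≤ ∫⁻ r in Ioi (0 : ℝ),
          ENNReal.ofReal (r ^ (k - 1)) * ∫⁻ ω, ENNReal.ofReal (exp (-(r * S T ω))) ∂μ :=
        ofReal_gamma_mul_lintegral_rpow_neg_le μ (hSmeas T) (hSnn T) hk
    _ = ∫⁻ r in Ioi (0 : ℝ), ENNReal.ofReal (r ^ (k - 1) * exp (-(T * B r))) :=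
        setLIntegral_congr_fun measurableSet_Ioi fun r hr => by
          rw [lintegral_ofReal_exp_neg_mul μ (hSmeas T) (hSnn T) (le_of_lt hr),
            hLaplace T r hT.1.le (le_of_lt hr), ENNReal.ofReal_mul (rpow_nonneg (le_of_lt hr) _)]
    _ ≤ ENNReal.ofReal (K * T ^ (-(2 * k / α))) := by
        simpa only [show k / (α / 2) = 2 * k / α by ring] using
          lintegral_rpow_mul_exp_neg_mul_le (by positivity) hc hr₀.le hk hT hB0 hB
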